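/- Let p be an odd prime, let s' ≥ 1 be an integer and set s = 2s'. Let X₁, X₂, X₃, X₄ be integers with p^{s'} | X₃ and p^{s'} | X₄. For an integer α coprime to p, write ᾱ for a multiplicative inverse of α modulo p^{s}. Then Σ_{α} e( ( X₁ ᾱ + X₂ (α+1)̄ + X₃ ᾱ² + X₄ ((α+1)̄)² ) / p^{s} ), where α runs over a complete set of residues modulo p^{s} with p ∤ α and p ∤ (α+1), equals p^{s'} · Σ_{α₁} e( ( X₁ ᾱ₁ + X₂ (α₁+1)̄ + X₃ ᾱ₁² + X₄ ((α₁+1)̄)² ) / p^{s} ), where α₁ runs over the integers 0 ≤ α₁ < p^{s'} with p ∤ α₁, p ∤ (α₁+1) and X₁ ᾱ₁² + X₂ ((α₁+1)̄)² ≡ 0 (mod p^{s'}). -/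

import Mathlib

/-!
Put `N = p^{s'}`, so `p^s = N²`, and write `α = a + cN` with `0 ≤ a, c < N`. As `N² ≡ 0`, the
inverse of `a + cN` is `ā - cNā²` modulo `N²`, and since `N` divides `X₃` and `X₄` the quadratic
terms only see `ā²`. Hence the phase `f(α) = X₁ᾱ + X₂(α+1)̄ + X₃ᾱ² + X₄(α+1)̄²` satisfies
`f(a + cN) ≡ f(a) - cN·D(a) (mod N²)` with `D(a) = X₁ā² + X₂(a+1)̄²`, which is linear in `c`, and
summing `e(-c·D(a)/N)` over `c` gives `N` or `0` according as `N ∣ D(a)` or not.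
-/

/-- The standard additive character `e(x) = exp(2πix)`. -/
noncomputable def e (x : ℝ) : ℂ := Complex.exp (2 * (Real.pi : ℂ) * Complex.I * (x : ℂ))

open Finset

theorem e_add (x y : ℝ) : e (x + y) = e x * e y := by
  simp only [e, ← Complex.exp_add]
  congr 1
  push_cast
  ring

theorem e_nat_mul (k : ℕ) (x : ℝ) : e (k * x) = e x ^ k := by
  simp only [e, ← Complex.exp_nat_mul]
  congr 1
  push_cast
  ring

theorem e_eq_one_iff (x : ℝ) : e x = 1 ↔ ∃ n : ℤ, x = n := by
  have h2πi : 2 * (Real.pi : ℂ) * Complex.I ≠ 0 := by simp [Real.pi_ne_zero]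
  simp only [e, Complex.exp_eq_one_iff, mul_comm _ (2 * (Real.pi : ℂ) * Complex.I),
    mul_right_inj' h2πi]
  exact exists_congr fun n => by exact_mod_cast Iff.rfl

theorem e_intCast (n : ℤ) : e n = 1 := (e_eq_one_iff _).2 ⟨n, rfl⟩

theorem e_intCast_div_eq_one_iff (D : ℤ) {N : ℕ} (hN : 0 < N) :
    e (D / N) = 1 ↔ (N : ℤ) ∣ D := by
  have hN' : (N : ℝ) ≠ 0 := by positivity
  rw [e_eq_one_iff]
  refine exists_congr fun n => ?_
  rw [div_eq_iff hN', mul_comm]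
  exact_mod_cast Iff.rfl

theorem e_intCast_div_eq_of_modEq {a b : ℤ} {N : ℕ} (h : a ≡ b [ZMOD N]) :
    e (a / N) = e (b / N) := by
  rcases N.eq_zero_or_pos with rfl | hN
  · rw [Int.natCast_zero, Int.modEq_zero_iff] at h
    rw [h]
  obtain ⟨k, hk⟩ := h.dvd
  have hb : (b : ℝ) / N = a / N + k := by
    rw [eq_add_of_sub_eq' hk]
    push_cast
    field_simp
  rw [hb, e_add, e_intCast, mul_one]

theorem sum_range_e_mul_div (D : ℤ) {N : ℕ} (hN : 0 < N) :
    ∑ c ∈ range N, e (c * D / N) = if (N : ℤ) ∣ D then (N : ℂ) else 0 := by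
  simp only [mul_div_assoc, e_nat_mul]
  split_ifs with hD
  · simp [(e_intCast_div_eq_one_iff D hN).2 hD]
  · have hN' : (N : ℝ) ≠ 0 := by positivity
    rw [geom_sum_eq (mt (e_intCast_div_eq_one_iff D hN).1 hD), ← e_nat_mul,
      mul_div_cancel₀ _ hN', e_intCast, sub_self, zero_div]

theorem Finset.sum_range_mul_eq_sum_sum {M : Type*} [AddCommMonoid M] (G : ℕ → M) (m n : ℕ) :
    ∑ x ∈ range (m * n), G x = ∑ a ∈ range m, ∑ c ∈ range n, G (a + c * m) := by
  induction n with
  | zero => simp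
  | succ n ih =>
    simp only [Nat.mul_succ, sum_range_add, ih, sum_range_succ, sum_add_distrib]
    congr 1
    exact sum_congr rfl fun a _ => by rw [add_comm, mul_comm]

theorem eq_sub_of_mul_eq_one_of_sq_eq_zero {R : Type*} [CommRing R] {a c n u u' : R}
    (hn : n ^ 2 = 0) (hu : a * u = 1) (hu' : (a + c * n) * u' = 1) :
    u' = u - c * n * u ^ 2 := by
  linear_combination (u - c * n * u ^ 2) * hu' - u' * ((1 - c * n * u) * hu - c ^ 2 * u ^ 2 * hn)

theorem phase_add_mul_of_sq_eq_zero {R : Type*} [CommRing R] {n a c u v u' v' X₁ X₂ k₃ k₄ : R}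
    (hn : n ^ 2 = 0) (hu : a * u = 1) (hv : (a + 1) * v = 1)
    (hu' : (a + c * n) * u' = 1) (hv' : (a + c * n + 1) * v' = 1) :
    X₁ * u' + X₂ * v' + n * k₃ * u' ^ 2 + n * k₄ * v' ^ 2
      = X₁ * u + X₂ * v + n * k₃ * u ^ 2 + n * k₄ * v ^ 2 - c * n * (X₁ * u ^ 2 + X₂ * v ^ 2) := by
  rw [add_right_comm] at hv'
  rw [eq_sub_of_mul_eq_one_of_sq_eq_zero hn hu hu', eq_sub_of_mul_eq_one_of_sq_eq_zero hn hv hv']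
  linear_combination
    (k₃ * (u ^ 4 * c ^ 2 * n - 2 * u ^ 3 * c) + k₄ * (v ^ 4 * c ^ 2 * n - 2 * v ^ 3 * c)) * hn

theorem modEq_sq_iff_intCast_eq {N : ℕ} {x y : ℤ} :
    x ≡ y [ZMOD (N : ℤ) ^ 2] ↔ (x : ZMod (N ^ 2)) = y := by
  rw [ZMod.intCast_eq_intCast_iff, Nat.cast_pow]

theorem phase_add_mul_modEq {N : ℕ} {X₁ X₂ X₃ X₄ a c : ℤ} (inv : ℤ → ℤ)
    (hX₃ : (N : ℤ) ∣ X₃) (hX₄ : (N : ℤ) ∣ X₄)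
    (ha : a * inv a ≡ 1 [ZMOD (N : ℤ) ^ 2]) (ha₁ : (a + 1) * inv (a + 1) ≡ 1 [ZMOD (N : ℤ) ^ 2])
    (hac : (a + c * N) * inv (a + c * N) ≡ 1 [ZMOD (N : ℤ) ^ 2])
    (hac₁ : (a + c * N + 1) * inv (a + c * N + 1) ≡ 1 [ZMOD (N : ℤ) ^ 2]) :
    X₁ * inv (a + c * N) + X₂ * inv (a + c * N + 1)
        + X₃ * inv (a + c * N) ^ 2 + X₄ * inv (a + c * N + 1) ^ 2
      ≡ X₁ * inv a + X₂ * inv (a + 1) + X₃ * inv a ^ 2 + X₄ * inv (a + 1) ^ 2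
        - c * N * (X₁ * inv a ^ 2 + X₂ * inv (a + 1) ^ 2) [ZMOD (N : ℤ) ^ 2] := by
  obtain ⟨k₃, rfl⟩ := hX₃
  obtain ⟨k₄, rfl⟩ := hX₄
  rw [modEq_sq_iff_intCast_eq] at *
  push_cast at *
  refine phase_add_mul_of_sq_eq_zero ?_ ha ha₁ hac hac₁
  exact_mod_cast ZMod.natCast_self (N ^ 2)

theorem e_div_sq_eq_mul_of_modEq {N : ℕ} (hN : 0 < N) {x y D : ℤ} (c : ℕ)
    (h : x ≡ y - c * N * D [ZMOD (N : ℤ) ^ 2]) :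
    e (x / (N : ℝ) ^ 2) = e (y / (N : ℝ) ^ 2) * e (c * (-D : ℤ) / N) := by
  have hN' : (N : ℝ) ≠ 0 := by positivity
  have h' : x ≡ y - c * N * D [ZMOD (N ^ 2 : ℕ)] := by rwa [Nat.cast_pow]
  have hshift := e_intCast_div_eq_of_modEq h'
  push_cast at hshift
  rw [hshift, ← e_add]
  congr 1
  field_simp
  push_cast
  ring

theorem sum_filter_e_div_sq_of_linear_shift {N : ℕ} (hN : 0 < N) (P : ℕ → Prop)
    [DecidablePred P]
    (hP : ∀ a c, P (a + c * N) ↔ P a) (φ D : ℤ → ℤ)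
    (hφ : ∀ a c : ℕ, P a → φ (a + c * N) ≡ φ a - c * N * D a [ZMOD (N : ℤ) ^ 2]) :
    ∑ α ∈ (range (N ^ 2)).filter P, e (φ α / (N : ℝ) ^ 2)
      = N * ∑ a ∈ (range N).filter (fun a => P a ∧ D a ≡ 0 [ZMOD N]), e (φ a / (N : ℝ) ^ 2) := by
  have hfiber : ∀ a, P a →
      ∑ c ∈ range N, e (φ (a + c * N : ℕ) / (N : ℝ) ^ 2)
        = if D a ≡ 0 [ZMOD N] then N * e (φ a / (N : ℝ) ^ 2) else 0 := by
    intro a ha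
    simp only [Nat.cast_add, Nat.cast_mul, e_div_sq_eq_mul_of_modEq hN _ (hφ a _ ha)]
    rw [← mul_sum, sum_range_e_mul_div _ hN]
    simp only [dvd_neg, Int.modEq_zero_iff_dvd]
    split_ifs <;> ring
  rw [sum_filter, sq, sum_range_mul_eq_sum_sum, mul_sum, sum_filter]
  refine sum_congr rfl fun a _ => ?_
  by_cases ha : P a
  · simp only [hP, ha, if_true, true_and, hfiber a ha]
  · simp [hP, ha]

theorem stmt_10_general (p : ℕ) (hp : p.Prime)
    (s' : ℕ) (hs' : 1 ≤ s') (s : ℕ) (hs : s = 2 * s')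
    (X₁ X₂ X₃ X₄ : ℤ) (hX₃ : (p : ℤ) ^ s' ∣ X₃) (hX₄ : (p : ℤ) ^ s' ∣ X₄)
    (inv : ℤ → ℤ)
    (hinv : ∀ a : ℤ, ¬ (p : ℤ) ∣ a → a * inv a ≡ 1 [ZMOD ((p : ℤ) ^ s)]) :
    (∑ α ∈ (Finset.range (p ^ s)).filter (fun α => ¬ p ∣ α ∧ ¬ p ∣ (α + 1)),
        e (((X₁ * inv (α : ℤ) + X₂ * inv ((α : ℤ) + 1)
              + X₃ * (inv (α : ℤ)) ^ 2 + X₄ * (inv ((α : ℤ) + 1)) ^ 2 : ℤ) : ℝ)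
            / (p : ℝ) ^ s))
      = ((p : ℂ)) ^ s' *
        ∑ α₁ ∈ (Finset.range (p ^ s')).filter
            (fun α₁ => ¬ p ∣ α₁ ∧ ¬ p ∣ (α₁ + 1) ∧
              X₁ * (inv (α₁ : ℤ)) ^ 2 + X₂ * (inv ((α₁ : ℤ) + 1)) ^ 2
                ≡ 0 [ZMOD ((p : ℤ) ^ s')]),
          e (((X₁ * inv (α₁ : ℤ) + X₂ * inv ((α₁ : ℤ) + 1)
                + X₃ * (inv (α₁ : ℤ)) ^ 2 + X₄ * (inv ((α₁ : ℤ) + 1)) ^ 2 : ℤ) : ℝ)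
              / (p : ℝ) ^ s) := by
  obtain ⟨N, hN⟩ : ∃ N, N = p ^ s' := ⟨_, rfl⟩
  have hpN : p ∣ N := hN ▸ dvd_pow_self p (by omega)
  have hps : p ^ s = N ^ 2 := by rw [hN, hs, ← pow_mul, mul_comm]
  have hNZ : (p : ℤ) ^ s' = N := by rw [hN]; push_cast; rfl
  have hunit : ∀ b : ℕ, ¬ p ∣ b → (b : ℤ) * inv b ≡ 1 [ZMOD (N : ℤ) ^ 2] := fun b hb => by
    have := hinv b (by exact_mod_cast hb)
    rwa [← Nat.cast_pow, hps, Nat.cast_pow] at this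
  have hP : ∀ a c, (¬ p ∣ a + c * N ∧ ¬ p ∣ a + c * N + 1) ↔ (¬ p ∣ a ∧ ¬ p ∣ a + 1) :=
    fun a c => by rw [add_right_comm, Nat.dvd_add_left (hpN.mul_left c),
      Nat.dvd_add_left (hpN.mul_left c)]
  have key := sum_filter_e_div_sq_of_linear_shift (hN ▸ pow_pos hp.pos s')
    (fun a => ¬ p ∣ a ∧ ¬ p ∣ a + 1) hP
    (fun a => X₁ * inv a + X₂ * inv (a + 1) + X₃ * inv a ^ 2 + X₄ * inv (a + 1) ^ 2)
    (fun a => X₁ * inv a ^ 2 + X₂ * inv (a + 1) ^ 2) fun a c ⟨ha, ha₁⟩ => by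
      obtain ⟨hac, hac₁⟩ := (hP a c).2 ⟨ha, ha₁⟩
      exact phase_add_mul_modEq inv (hNZ ▸ hX₃) (hNZ ▸ hX₄) (hunit a ha)
        (by exact_mod_cast hunit _ ha₁) (by exact_mod_cast hunit _ hac)
        (by exact_mod_cast hunit _ hac₁)
  have hpsR : (p : ℝ) ^ s = (N : ℝ) ^ 2 := by exact_mod_cast hps
  have hNC : (p : ℂ) ^ s' = N := by rw [hN]; push_cast; rfl
  rw [hps, hpsR, hNC, ← hN, hNZ]
  simpa only [and_assoc] using key

/-- **p-adic stationary phase identity** (Section 5 of the paper, obtained by splitting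
`α = α₁ + α₂ p^{s'}` with `s = 2s'` and summing over `α₂`): if `p^{s'} ∣ X₃, X₄` then
`∑_{α mod p^s, p∤α, p∤α+1} e((X₁ᾱ + X₂(α+1)̄ + X₃ᾱ² + X₄((α+1)̄)²)/p^s)
 = p^{s'} ∑_{α₁ mod p^{s'}, p∤α₁, p∤α₁+1, X₁ᾱ₁² + X₂((α₁+1)̄)² ≡ 0 mod p^{s'}}
     e((X₁ᾱ₁ + X₂(α₁+1)̄ + X₃ᾱ₁² + X₄((α₁+1)̄)²)/p^s)`,
where `ū = inv u` is any choice of multiplicative inverse modulo `p^s`. -/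
theorem stmt_10 (p : ℕ) (hp : p.Prime) (hodd : Odd p)
    (s' : ℕ) (hs' : 1 ≤ s') (s : ℕ) (hs : s = 2 * s')
    (X₁ X₂ X₃ X₄ : ℤ) (hX₃ : (p : ℤ) ^ s' ∣ X₃) (hX₄ : (p : ℤ) ^ s' ∣ X₄)
    (inv : ℤ → ℤ)
    (hinv : ∀ a : ℤ, ¬ (p : ℤ) ∣ a → a * inv a ≡ 1 [ZMOD ((p : ℤ) ^ s)]) :
    (∑ α ∈ (Finset.range (p ^ s)).filter (fun α => ¬ p ∣ α ∧ ¬ p ∣ (α + 1)),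
        e (((X₁ * inv (α : ℤ) + X₂ * inv ((α : ℤ) + 1)
              + X₃ * (inv (α : ℤ)) ^ 2 + X₄ * (inv ((α : ℤ) + 1)) ^ 2 : ℤ) : ℝ)
            / (p : ℝ) ^ s))
      = ((p : ℂ)) ^ s' *
        ∑ α₁ ∈ (Finset.range (p ^ s')).filter
            (fun α₁ => ¬ p ∣ α₁ ∧ ¬ p ∣ (α₁ + 1) ∧
              X₁ * (inv (α₁ : ℤ)) ^ 2 + X₂ * (inv ((α₁ : ℤ) + 1)) ^ 2
                ≡ 0 [ZMOD ((p : ℤ) ^ s')]),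
          e (((X₁ * inv (α₁ : ℤ) + X₂ * inv ((α₁ : ℤ) + 1)
                + X₃ * (inv (α₁ : ℤ)) ^ 2 + X₄ * (inv ((α₁ : ℤ) + 1)) ^ 2 : ℤ) : ℝ)
              / (p : ℝ) ^ s) :=
  stmt_10_general p hp s' hs' s hs X₁ X₂ X₃ X₄ hX₃ hX₄ inv hinv
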